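/- arXiv:2401.00199 — 3 statements merged into one kernel-verified Lean document; each statement's English description precedes it below -/
import Mathlib

section
/- Let p be a prime and n ≥ 2 with p dividing n. Let B be the n×n matrix over ℤ/p with first row entries b_{1,j} = (−1)^{j+1} C(n,j) for 1 ≤ j ≤ n, entries b_{i,j} = 1 when i = j+1, and all other entries 0. Then B lies in SL_n(ℤ/p) and the order of B in GL_n(ℤ/p) is a power of p. -/
/-- for a prime `p` dividing `n`, the companion-type matrix `B` over `ℤ/p`
with first row `(-1)^{j+1} C(n,j)` and ones on the subdiagonal has determinant 1
(so lies in `SL_n(ℤ/p)`) and its multiplicative order is a power of `p`. -/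
theorem stmt_5 (p : ℕ) (hp : p.Prime) (n : ℕ) (hn : 2 ≤ n) (hpn : p ∣ n)
    (B : Matrix (Fin n) (Fin n) (ZMod p))
    (hB1 : ∀ i j : Fin n, (i : ℕ) = 0 → B i j = (-1) ^ ((j : ℕ) + 1 + 1) * (n.choose ((j : ℕ) + 1) : ZMod p))
    (hB2 : ∀ i j : Fin n, (i : ℕ) ≠ 0 →
      B i j = if (i : ℕ) = (j : ℕ) + 1 then 1 else 0) :
    B.det = 1 ∧ ∃ ℓ : ℕ, orderOf B = p ^ ℓ := by
  haveI : Fact p.Prime := ⟨hp⟩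
  have hn1 : n - 1 < n := by omega
  -- rows of powers of B
  have key : ∀ k : ℕ, k ≤ n - 1 → ∀ j : Fin n,
      (B ^ k) ⟨n - 1, hn1⟩ j = if (j : ℕ) + k = n - 1 then 1 else 0 := by
    intro k
    induction k with
    | zero =>
      intro _ j
      rw [pow_zero, Matrix.one_apply]
      by_cases h : (j : ℕ) + 0 = n - 1
      · have h2 : (⟨n - 1, hn1⟩ : Fin n) = j := Fin.ext (show n - 1 = (j : ℕ) by omega)
        rw [if_pos h2, if_pos h]
      · have h2 : (⟨n - 1, hn1⟩ : Fin n) ≠ j := by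
          intro hc
          apply h
          have := congrArg Fin.val hc
          simp at this
          omega
        rw [if_neg h2, if_neg h]
    | succ k ih =>
      intro hk j
      have hk' : k ≤ n - 1 := by omega
      have hi0 : n - 1 - k < n := by omega
      rw [pow_succ, Matrix.mul_apply, Finset.sum_eq_single (⟨n - 1 - k, hi0⟩ : Fin n)]
      · rw [ih hk' ⟨n - 1 - k, hi0⟩]
        rw [if_pos (by simp; omega), one_mul, hB2 _ j (by simp; omega)]
        by_cases h : (j : ℕ) + (k + 1) = n - 1
        · rw [if_pos h, if_pos (by simp; omega)]
        · rw [if_neg h, if_neg (by simp; omega)]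
      · intro b _ hne
        rw [ih hk' b, if_neg, zero_mul]
        intro hc
        exact hne (Fin.ext (by simp; omega))
      · intro habs
        exact absurd (Finset.mem_univ _) habs
  -- row n-1 of B^n
  have hBn : ∀ j : Fin n, (B ^ n) ⟨n - 1, hn1⟩ j
      = (-1 : ZMod p) ^ (j : ℕ) * (n.choose ((j : ℕ) + 1) : ZMod p) := by
    intro j
    have hpow : B ^ n = B ^ (n - 1) * B := by
      rw [← pow_succ]
      congr 1
      omega
    have h0 : (0 : ℕ) < n := by omega
    rw [hpow, Matrix.mul_apply, Finset.sum_eq_single (⟨0, h0⟩ : Fin n)]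
    · rw [key (n - 1) le_rfl, if_pos (by simp), one_mul, hB1 _ j rfl]
      rw [show ((j : ℕ) + 1 + 1) = (j : ℕ) + 2 from rfl, pow_add, neg_one_sq, mul_one]
    · intro b _ hne
      rw [key (n - 1) le_rfl b, if_neg, zero_mul]
      intro hc
      exact hne (Fin.ext (by simp; omega))
    · intro habs
      exact absurd (Finset.mem_univ _) habs
  -- binomial expansion of (B-1)^n
  have hexp : (B - 1) ^ n = ∑ m ∈ Finset.range (n + 1),
      ((-1 : ZMod p) ^ (n - m) * (n.choose m : ZMod p)) • B ^ m := by
    rw [sub_eq_add_neg, Commute.add_pow (Commute.neg_one_right B)]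
    refine Finset.sum_congr rfl fun m _ => ?_
    have h1 : (-1 : Matrix (Fin n) (Fin n) (ZMod p)) = ((-1 : ZMod p)) • 1 := by simp
    rw [h1, smul_pow, one_pow, mul_smul_comm, mul_one, smul_mul_assoc,
      ← (Nat.cast_commute (n.choose m) (B ^ m)).eq, ← nsmul_eq_mul,
      ← Nat.cast_smul_eq_nsmul (ZMod p), smul_smul]
  -- row n-1 of (B-1)^n vanishes
  have hrow0 : ∀ j : Fin n, ((B - 1) ^ n) ⟨n - 1, hn1⟩ j = 0 := by
    intro j
    rw [hexp, Matrix.sum_apply, Finset.sum_range_succ]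
    have hlast : (((-1 : ZMod p) ^ (n - n) * (n.choose n : ZMod p)) • B ^ n) ⟨n - 1, hn1⟩ j
        = (-1 : ZMod p) ^ (j : ℕ) * (n.choose ((j : ℕ) + 1) : ZMod p) := by
      rw [Matrix.smul_apply, hBn j, Nat.sub_self, pow_zero, Nat.choose_self,
        Nat.cast_one, one_mul, one_smul]
    rw [hlast]
    have hj1 : (j : ℕ) + 1 ≤ n := j.isLt
    have hsum : ∑ m ∈ Finset.range n,
        (((-1 : ZMod p) ^ (n - m) * (n.choose m : ZMod p)) • B ^ m) ⟨n - 1, hn1⟩ j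
        = (-1 : ZMod p) ^ ((j : ℕ) + 1) * (n.choose ((j : ℕ) + 1) : ZMod p) := by
      rw [Finset.sum_eq_single (n - 1 - (j : ℕ))]
      · rw [Matrix.smul_apply, key (n - 1 - (j : ℕ)) (by omega) j, if_pos (by omega),
          smul_eq_mul, mul_one]
        have e1 : n - (n - 1 - (j : ℕ)) = (j : ℕ) + 1 := by omega
        have e2 : n.choose (n - 1 - (j : ℕ)) = n.choose ((j : ℕ) + 1) := by
          rw [show n - 1 - (j : ℕ) = n - ((j : ℕ) + 1) by omega, Nat.choose_symm hj1]
        rw [e1, e2]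
      · intro m hm hne
        rw [Matrix.smul_apply, key m (by simp at hm; omega) j, if_neg (by omega),
          smul_eq_mul, mul_zero]
      · intro habs
        exact absurd (Finset.mem_range.mpr (by omega)) habs
    rw [hsum, pow_succ, mul_neg_one]
    ring
  -- (B-1)^n = 0
  have hNil : (B - 1) ^ n = 0 := by
    have hcomm : Commute (B ^ (0 : ℕ)) ((B - 1) ^ n) := by exact Commute.pow_pow (by
      exact Commute.sub_right (Commute.refl B) (Commute.one_right B)) 0 n
    ext i j
    have hcomm2 : B ^ (n - 1 - (i : ℕ)) * (B - 1) ^ n = (B - 1) ^ n * B ^ (n - 1 - (i : ℕ)) :=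
      (Commute.pow_pow (Commute.sub_right (Commute.refl B) (Commute.one_right B))
        (n - 1 - (i : ℕ)) n).eq
    have h1 : ((B - 1) ^ n) i j = (B ^ (n - 1 - (i : ℕ)) * (B - 1) ^ n) ⟨n - 1, hn1⟩ j := by
      rw [Matrix.mul_apply, Finset.sum_eq_single i]
      · rw [key (n - 1 - (i : ℕ)) (by omega) i, if_pos (by omega), one_mul]
      · intro b _ hne
        rw [key (n - 1 - (i : ℕ)) (by omega) b, if_neg, zero_mul]
        intro hc
        exact hne (Fin.ext (by omega))
      · intro habs
        exact absurd (Finset.mem_univ _) habs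
    rw [Matrix.zero_apply, h1, hcomm2, Matrix.mul_apply]
    refine Finset.sum_eq_zero fun t _ => ?_
    rw [hrow0 t, zero_mul]
  -- B ^ (p ^ n) = 1
  haveI : Nonempty (Fin n) := ⟨⟨0, by omega⟩⟩
  have hBpow : B ^ (p ^ n) = 1 := by
    have hnle : n ≤ p ^ n := le_of_lt (Nat.lt_pow_self hp.one_lt : n < p ^ n)
    have hNn : (B - 1) ^ (p ^ n) = 0 := by
      rw [show p ^ n = n + (p ^ n - n) by omega, pow_add, hNil, zero_mul]
    have hb : B = 1 + (B - 1) := by abel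
    rw [hb, add_pow_char_pow_of_commute p n (Commute.one_left (B - 1)), one_pow, hNn, add_zero]
  have hdvd : orderOf B ∣ p ^ n := orderOf_dvd_of_pow_eq_one hBpow
  obtain ⟨ℓ, _, hℓ⟩ := (Nat.dvd_prime_pow hp).mp hdvd
  refine ⟨?_, ℓ, hℓ⟩
  have hdet : B.det ^ (p ^ n) = 1 := by
    rw [← Matrix.det_pow, hBpow, Matrix.det_one]
  calc B.det = B.det ^ (p ^ n) := (ZMod.pow_card_pow B.det).symm
    _ = 1 := hdet
end

section
/- Let n ≥ 2. Define n×n integer matrices: B with b_{1,j} = (−1)^{j+1} C(n,j), b_{i,j} = 1 if i = j+1 (i ≥ 2), and 0 otherwise; A with a_{i,j} = C(n−i, n−j); and D with d_{i,j} = 1 if i = j or i = j+1, and 0 otherwise. Then BA = AD, i.e., both products have (i,j)-entry equal to C(n−i+1, n−j). -/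
open Finset in
lemma sumAlt (N : ℕ) (hN : 1 ≤ N) :
    ∑ k ∈ Finset.range N, (-1:ℤ)^k * (N.choose (k+1)) = 1 := by
  have h0 : ∑ i ∈ Finset.range (N+1), (-1:ℤ)^i * (N.choose i) = 0 :=
    Int.alternating_sum_range_choose_of_ne (by omega)
  rw [Finset.sum_range_succ'] at h0
  simp only [pow_succ, Nat.choose_zero_right, pow_zero, Nat.cast_one, mul_one, one_mul] at h0
  have h1 : ∀ x ∈ Finset.range N, (-1:ℤ)^x * -1 * (N.choose (x+1))
      = -((-1)^x * (N.choose (x+1))) := by intro x _; ring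
  rw [Finset.sum_congr rfl h1, Finset.sum_neg_distrib] at h0
  linarith

lemma natid (n m k : ℕ) (hk : k < n) :
    n.choose (k+1) * (n-1-k).choose m = n.choose m * (n-m).choose (k+1) := by
  by_cases hm : m ≤ n - 1 - k
  · have h1 : n - 1 - k = n - (k+1) := by omega
    have h2 : n.choose (k+1) = n.choose (n - (k+1)) := (Nat.choose_symm (by omega)).symm
    rw [h1, h2, Nat.choose_mul (n := n) (k := n - (k+1)) (s := m) (by omega)]
    congr 1
    have h3 : n - (k+1) - m = (n - m) - (k+1) := by omega
    rw [h3, Nat.choose_symm (by omega)]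
  · by_cases hmn : m ≤ n
    · rw [Nat.choose_eq_zero_of_lt (show n-1-k < m by omega),
        Nat.choose_eq_zero_of_lt (show n-m < k+1 by omega)]
      ring
    · rw [Nat.choose_eq_zero_of_lt (show n-1-k < m by omega),
        Nat.choose_eq_zero_of_lt (show n < m by omega)]
      ring

lemma key (n m : ℕ) (hm : m < n) :
    ∑ k ∈ Finset.range n, (-1:ℤ)^k * (n.choose (k+1)) * ((n-1-k).choose m)
      = n.choose m := by
  have h1 : ∀ k ∈ Finset.range n, (-1:ℤ)^k * (n.choose (k+1)) * ((n-1-k).choose m)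
      = (n.choose m : ℤ) * ((-1)^k * ((n-m).choose (k+1))) := by
    intro k hk
    rw [Finset.mem_range] at hk
    calc (-1:ℤ)^k * (n.choose (k+1)) * ((n-1-k).choose m)
        = (-1)^k * ((n.choose (k+1) * (n-1-k).choose m : ℕ) : ℤ) := by push_cast; ring
      _ = (-1)^k * ((n.choose m * (n-m).choose (k+1) : ℕ) : ℤ) := by rw [natid n m k hk]
      _ = (n.choose m : ℤ) * ((-1)^k * ((n-m).choose (k+1))) := by push_cast; ring
  rw [Finset.sum_congr rfl h1, ← Finset.mul_sum]
  have hsub : Finset.range (n - m) ⊆ Finset.range n := by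
    apply Finset.range_subset_range.2; omega
  have hz : ∀ k ∈ Finset.range n, k ∉ Finset.range (n-m) →
      (-1:ℤ)^k * ((n-m).choose (k+1)) = 0 := by
    intro k _ hk
    rw [Finset.mem_range, not_lt] at hk
    rw [Nat.choose_eq_zero_of_lt (by omega)]
    ring
  rw [← Finset.sum_subset hsub hz, sumAlt (n-m) (by omega), mul_one]

/-- with `B`, `A`, `D` the integer matrices of the paper
(`b_{1,j} = (−1)^{j+1} C(n,j)`, subdiagonal ones; `a_{i,j} = C(n−i,n−j)`;
`D` the lower unitriangular Jordan-type matrix), we have `BA = AD`, and both products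
have `(i,j)`-entry `C(n−i+1, n−j)` (here written with 0-based indices). -/
theorem stmt_6 (n : ℕ) (hn : 2 ≤ n)
    (B A D : Matrix (Fin n) (Fin n) ℤ)
    (hB1 : ∀ i j : Fin n, (i : ℕ) = 0 → B i j = (-1) ^ ((j : ℕ) + 1 + 1) * (n.choose ((j : ℕ) + 1) : ℤ))
    (hB2 : ∀ i j : Fin n, (i : ℕ) ≠ 0 →
      B i j = if (i : ℕ) = (j : ℕ) + 1 then 1 else 0)
    (hA : ∀ i j : Fin n, A i j = ((n - 1 - (i : ℕ)).choose (n - 1 - (j : ℕ)) : ℤ))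
    (hD : ∀ i j : Fin n, D i j = if i = j ∨ (i : ℕ) = (j : ℕ) + 1 then 1 else 0) :
    B * A = A * D ∧
      ∀ i j : Fin n, (B * A) i j = ((n - (i : ℕ)).choose (n - 1 - (j : ℕ)) : ℤ) := by
  have hBA : ∀ i j : Fin n, (B * A) i j = ((n - (i : ℕ)).choose (n - 1 - (j : ℕ)) : ℤ) := by
    intro i j
    rw [Matrix.mul_apply]
    by_cases hi : (i : ℕ) = 0
    · simp only [hB1 _ _ hi, hA, hi, Nat.sub_zero]
      rw [Fin.sum_univ_eq_sum_range
        (fun k => (-1:ℤ) ^ (k + 1 + 1) * (n.choose (k+1)) * ((n-1-k).choose (n-1-(j:ℕ))))]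
      rw [← key n (n-1-(j:ℕ)) (by omega)]
      apply Finset.sum_congr rfl
      intro k _
      have : (-1:ℤ) ^ (k+1+1) = (-1)^k := by
        rw [pow_succ, pow_succ]; ring
      rw [this]
    · simp only [hB2 _ _ hi, hA]
      have hlt : (i : ℕ) - 1 < n := by omega
      have heq : ∀ k : Fin n, ((i : ℕ) = (k : ℕ) + 1) ↔ k = ⟨(i:ℕ)-1, hlt⟩ := by
        intro k
        constructor
        · intro h; apply Fin.ext; simp; omega
        · intro h; subst h; simp; omega
      simp only [heq, ite_mul, one_mul, zero_mul]
      rw [Finset.sum_ite_eq' Finset.univ (⟨(i:ℕ)-1, hlt⟩ : Fin n)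
        (fun k => ((n - 1 - (k:ℕ)).choose (n - 1 - (j:ℕ)) : ℤ))]
      simp only [Finset.mem_univ, if_true]
      congr 2
      omega
  have hAD : ∀ i j : Fin n, (A * D) i j = ((n - (i : ℕ)).choose (n - 1 - (j : ℕ)) : ℤ) := by
    intro i j
    rw [Matrix.mul_apply]
    simp only [hD, hA]
    have hsplit : ∀ k : Fin n,
        (if k = j ∨ (k:ℕ) = (j:ℕ) + 1 then (1:ℤ) else 0)
          = (if k = j then (1:ℤ) else 0) + (if (k:ℕ) = (j:ℕ)+1 then (1:ℤ) else 0) := by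
      intro k
      by_cases h1 : k = j <;> by_cases h2 : (k:ℕ) = (j:ℕ)+1
      · exfalso; subst h1; omega
      · simp [h1, h2]
      · simp [h1, h2]
      · simp [h1, h2]
    simp only [hsplit, mul_add, Finset.sum_add_distrib]
    simp only [mul_ite, mul_one, mul_zero]
    rw [Finset.sum_ite_eq' Finset.univ j
      (fun k => ((n - 1 - (i:ℕ)).choose (n - 1 - (k:ℕ)) : ℤ))]
    simp only [Finset.mem_univ, if_true]
    by_cases hj : (j:ℕ) + 1 < n
    · have heq : ∀ k : Fin n, ((k:ℕ) = (j:ℕ) + 1) ↔ k = ⟨(j:ℕ)+1, hj⟩ := by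
        intro k; constructor
        · intro h; exact Fin.ext h
        · intro h; subst h; rfl
      simp only [heq]
      rw [Finset.sum_ite_eq' Finset.univ (⟨(j:ℕ)+1, hj⟩ : Fin n)
        (fun k => ((n - 1 - (i:ℕ)).choose (n - 1 - (k:ℕ)) : ℤ))]
      simp only [Finset.mem_univ, if_true]
      have e1 : n - 1 - ((j:ℕ)+1) = (n - 1 - (j:ℕ)) - 1 := by omega
      have e2 : n - (i:ℕ) = (n - 1 - (i:ℕ)) + 1 := by omega
      have e3 : n - 1 - (j:ℕ) = ((n-1-(j:ℕ)) - 1) + 1 := by omega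
      rw [e1, e2]
      rw [e3]  -- careful: rewrites in several places
      push_cast
      rw [Nat.choose_succ_succ' (n - 1 - (i:ℕ)) ((n-1-(j:ℕ)) - 1)]
      push_cast
      ring
    · have hz : ∀ k : Fin n, (if (k:ℕ) = (j:ℕ)+1
          then ((n - 1 - (i:ℕ)).choose (n - 1 - (k:ℕ)) : ℤ) else 0) = 0 := by
        intro k
        rw [if_neg (by omega)]
      rw [Finset.sum_congr rfl (fun k _ => hz k), Finset.sum_const_zero, add_zero]
      have e1 : n - 1 - (j:ℕ) = 0 := by omega
      rw [e1]
      simp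
  exact ⟨by ext i j; rw [hBA, hAD], hBA⟩
end

section
/- Let p be a prime dividing n, and let (α_i)_{i≥0} be a sequence in ℤ/p satisfying the recurrence α_{n+i} = Σ_{j=1}^{n} (−1)^{j+1} C(n,j) α_{n+i−j} for all i ≥ 0. Then the sequence is periodic with period a power of p; in particular α_{p^ℓ} = α_0 for some ℓ ≥ 1 and more generally α_{m·p^L} = α_0 for L large enough, for any m. -/
/-- a sequence in `ℤ/p` satisfying the linear recurrence with
coefficients `(−1)^{j+1} C(n,j)` (where `p ∣ n`) is periodic with period a power of
`p`; in particular `α_{p^ℓ} = α_0` for some `ℓ ≥ 1`, and `α_{m·p^L} = α_0` for all `m`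
and all sufficiently large `L`. -/
theorem stmt_15 (p : ℕ) (hp : p.Prime) (n : ℕ) (hn : 2 ≤ n) (hpn : p ∣ n)
    (α : ℕ → ZMod p)
    (hrec : ∀ i : ℕ, α (n + i) =
      ∑ j ∈ Finset.Icc 1 n, (-1 : ZMod p) ^ (j + 1) * (n.choose j : ZMod p) * α (n + i - j)) :
    ∃ ℓ : ℕ, 1 ≤ ℓ ∧ (∀ i : ℕ, α (i + p ^ ℓ) = α i) ∧ α (p ^ ℓ) = α 0 ∧
      ∀ m L : ℕ, ℓ ≤ L → α (m * p ^ L) = α 0 := by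
  haveI : Fact p.Prime := ⟨hp⟩
  -- The "(S-1)^N annihilates α" statement for all N ≥ n
  have key : ∀ N, n ≤ N → ∀ i : ℕ,
      ∑ k ∈ Finset.range (N + 1), (-1 : ZMod p) ^ k * (N.choose k : ZMod p) * α (i + (N - k))
        = 0 := by
    intro N hN
    induction N, hN using Nat.le_induction with
    | base =>
      intro i
      rw [Finset.sum_range_succ']
      have h := hrec i
      rw [← Finset.Ico_add_one_right_eq_Icc, Finset.sum_Ico_eq_sum_range] at h
      have : ∑ k ∈ Finset.range n,
          (-1 : ZMod p) ^ (k + 1) * (n.choose (k + 1) : ZMod p) * α (i + (n - (k + 1)))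
          = - α (n + i) := by
        rw [h, ← Finset.sum_neg_distrib]
        apply Finset.sum_congr rfl
        intro k hk
        rw [Finset.mem_range] at hk
        have : i + (n - (k + 1)) = n + i - (1 + k) := by omega
        rw [this, show 1 + k = k + 1 from by ring]
        ring
      rw [this]
      simp [add_comm n i]
    | succ N hN ih =>
      intro i
      rw [Finset.sum_range_succ']
      have split : ∀ k, ((N+1).choose (k+1) : ZMod p) = (N.choose k : ZMod p) + (N.choose (k+1) : ZMod p) := by
        intro k; rw [Nat.choose_succ_succ]; push_cast; ring
      have : ∑ k ∈ Finset.range (N + 1),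
          (-1 : ZMod p) ^ (k + 1) * ((N+1).choose (k + 1) : ZMod p) * α (i + (N + 1 - (k + 1)))
          = (∑ k ∈ Finset.range (N + 1),
              (-1 : ZMod p) ^ (k + 1) * (N.choose k : ZMod p) * α (i + (N - k)))
            + (∑ k ∈ Finset.range (N + 1),
              (-1 : ZMod p) ^ (k + 1) * (N.choose (k+1) : ZMod p) * α (i + (N - k))) := by
        rw [← Finset.sum_add_distrib]
        apply Finset.sum_congr rfl
        intro k hk
        rw [Finset.mem_range] at hk
        have hidx : i + (N + 1 - (k + 1)) = i + (N - k) := by omega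
        rw [hidx, split k]; ring
      rw [this]
      have h1 : ∑ k ∈ Finset.range (N + 1),
          (-1 : ZMod p) ^ (k + 1) * (N.choose k : ZMod p) * α (i + (N - k)) = 0 := by
        rw [← neg_eq_zero, ← Finset.sum_neg_distrib, ← ih i]
        apply Finset.sum_congr rfl
        intro k hk; rw [pow_succ]; ring
      -- second sum plus top term comes from ih (i+1)
      have h2 := ih (i + 1)
      rw [Finset.sum_range_succ'] at h2
      have h2' : ∑ k ∈ Finset.range (N + 1),
          (-1 : ZMod p) ^ (k + 1) * (N.choose (k+1) : ZMod p) * α (i + (N - k))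
          = ∑ k ∈ Finset.range N,
          (-1 : ZMod p) ^ (k + 1) * (N.choose (k+1) : ZMod p) * α (i + 1 + (N - (k+1))) := by
        rw [Finset.sum_range_succ]
        simp only [Nat.choose_succ_self, Nat.cast_zero, mul_zero, zero_mul, add_zero]
        apply Finset.sum_congr rfl
        intro k hk
        rw [Finset.mem_range] at hk
        have : i + (N - k) = i + 1 + (N - (k+1)) := by omega
        rw [this]
      rw [h1, h2', zero_add]
      have : ((-1 : ZMod p)) ^ 0 * ((N+1).choose 0 : ZMod p) * α (i + (N + 1 - 0))
          = (-1 : ZMod p) ^ 0 * (N.choose 0 : ZMod p) * α (i + 1 + (N - 0)) := by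
        norm_num
        congr 1
        omega
      rw [this, h2]
  -- specialize to N = p ^ n
  have hnp : n ≤ p ^ n := le_of_lt (Nat.lt_pow_self hp.one_lt : n < p ^ n)
  have hper : ∀ i : ℕ, α (i + p ^ n) = α i := by
    intro i
    have h := key (p ^ n) hnp i
    rw [Finset.sum_range_succ] at h
    have hmid : ∑ k ∈ Finset.range (p ^ n),
        (-1 : ZMod p) ^ k * ((p ^ n).choose k : ZMod p) * α (i + (p ^ n - k))
        = α (i + p ^ n) := by
      rw [Finset.sum_eq_single 0]
      · simp
      · intro k hk hk0
        rw [Finset.mem_range] at hk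
        have : ((p ^ n).choose k : ZMod p) = 0 := by
          rw [ZMod.natCast_eq_zero_iff]
          exact hp.dvd_choose_pow hk0 (Nat.ne_of_lt hk)
        rw [this]; ring
      · intro h0
        exact absurd (Finset.mem_range.mpr (pow_pos hp.pos n)) h0
    rw [hmid] at h
    have hsign : ((-1 : ZMod p)) ^ (p ^ n) = -1 := ZMod.pow_card_pow (-1)
    rw [hsign] at h
    simp only [Nat.choose_self, Nat.cast_one, Nat.sub_self, add_zero] at h
    linear_combination h
  refine ⟨n, by omega, hper, ?_, ?_⟩
  · have := hper 0; simpa using this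
  · have hmul : ∀ t : ℕ, α (t * p ^ n) = α 0 := by
      intro t
      induction t with
      | zero => simp
      | succ t ih => rw [add_mul, one_mul, hper (t * p ^ n)]; exact ih
    intro m L hL
    have : m * p ^ L = (m * p ^ (L - n)) * p ^ n := by
      rw [mul_assoc, ← pow_add]
      congr 2
      omega
    rw [this]
    exact hmul _
end
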